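/- arXiv:1510.08393 — 3 statements merged into one kernel-verified Lean document; each statement's English description precedes it below -/
import Mathlib

section
/- Let Σ be a finite signature, E a finite set of equations between ground Σ-terms, and C a finite subterm-closed set of ground Σ-terms such that every term occurring in an equation of E belongs to C. Then there exists a deterministic bottom-up tree automaton (Q, δ) over Σ (no accepting states needed), with one state per E-equivalence class of a term of C, such that for all ground terms s, t for which there exist s′, t′ ∈ C with E ⊢ s = s′ and E ⊢ t = t′: the values δ(s) and δ(t) are defined, and E ⊢ s = t holds if and only if δ(s) = δ(t). -/
namespace SyGuS

/-- Terms over a ranked alphabet: symbols `F`, each of arity `ar f`. -/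
inductive Tm (F : Type) (ar : F → ℕ) : Type
  | app (f : F) (args : Fin (ar f) → Tm F ar) : Tm F ar

/-- Arity function on `F ⊕ Fin k`: the `k` extra symbols are constants
(the variables `x₁,…,x_k`, treated as constants). -/
abbrev varAr {F : Type} (ar : F → ℕ) (k : ℕ) : F ⊕ Fin k → ℕ := Sum.elim ar fun _ => 0

/-- Arity function on `F ⊕ Unit`: the extra symbol is the function symbol `f` of arity `k`. -/
abbrev fAr {F : Type} (ar : F → ℕ) (k : ℕ) : F ⊕ Unit → ℕ := Sum.elim ar fun _ => k

/-- A (nonempty) first-order structure for the ranked alphabet `(F, ar)`. -/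
structure Str (F : Type) (ar : F → ℕ) : Type 1 where
  D : Type
  [nonemptyD : Nonempty D]
  interp : (f : F) → (Fin (ar f) → D) → D

attribute [instance] Str.nonemptyD

/-- Evaluation of a ground term in a structure. -/
def Tm.eval {F : Type} {ar : F → ℕ} (M : Str F ar) : Tm F ar → M.D
  | .app f args => M.interp f fun i => (args i).eval M

/-- First-order substitution: replace the variables `x₁,…,x_k` by terms. -/
def Tm.instVars {F : Type} {ar : F → ℕ} {k : ℕ} (σ : Fin k → Tm F ar) :
    Tm (F ⊕ Fin k) (varAr ar k) → Tm F ar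
  | .app (Sum.inl g) args => .app g fun i => Tm.instVars σ (args i)
  | .app (Sum.inr i) _ => σ i

/-- Second-order substitution `·{w/f}`: replace every application `f(s₁,…,s_k)` of the
distinguished symbol `f` by `w{s₁/x₁,…,s_k/x_k}`. -/
def Tm.soSubst {F : Type} {ar : F → ℕ} {k : ℕ} (w : Tm (F ⊕ Fin k) (varAr ar k)) :
    Tm (F ⊕ Unit) (fAr ar k) → Tm F ar
  | .app (Sum.inl g) args => .app g fun i => Tm.soSubst w (args i)
  | .app (Sum.inr _) args => Tm.instVars (fun i => Tm.soSubst w (args i)) w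

/-- Renaming of symbols along an arity-preserving map. -/
def Tm.rename {F G : Type} {arF : F → ℕ} {arG : G → ℕ} (h : F → G)
    (hh : ∀ f, arG (h f) = arF f) : Tm F arF → Tm G arG
  | .app f args => .app (h f) fun i => (args (Fin.cast (hh f) i)).rename h hh

/-- Equational consequence: `E ⊢ s = t` iff every structure satisfying all
equations of `E` also satisfies `s = t`. -/
def EqCons {F : Type} {ar : F → ℕ} (E : Set (Tm F ar × Tm F ar)) (s t : Tm F ar) : Prop :=
  ∀ M : Str F ar, (∀ e ∈ E, Tm.eval M e.1 = Tm.eval M e.2) → s.eval M = t.eval M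

/-- The subterm relation on terms. -/
inductive Tm.Subterm {F : Type} {ar : F → ℕ} : Tm F ar → Tm F ar → Prop
  | refl (t : Tm F ar) : Tm.Subterm t t
  | step {s : Tm F ar} (f : F) (args : Fin (ar f) → Tm F ar) (i : Fin (ar f)) :
      Tm.Subterm s (args i) → Tm.Subterm s (.app f args)

/-- A set of terms is subterm-closed if it contains all subterms of its members. -/
def SubtermClosed {F : Type} {ar : F → ℕ} (C : Set (Tm F ar)) : Prop :=
  ∀ t ∈ C, ∀ s, Tm.Subterm s t → s ∈ C

/-- Deterministic bottom-up tree automaton with a partial transition function. -/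
structure DTA (F : Type) (ar : F → ℕ) : Type 1 where
  Q : Type
  [fintypeQ : Fintype Q]
  δ : (f : F) → (Fin (ar f) → Q) → Option Q
  final : Set Q

attribute [instance] DTA.fintypeQ

/-- Sequence a finite tuple of options. -/
def finSeq {Q : Type} : {n : ℕ} → (Fin n → Option Q) → Option (Fin n → Q)
  | 0, _ => some (fun i => i.elim0)
  | _ + 1, f => (f 0).bind fun q => (finSeq fun i => f i.succ).map (Fin.cons q)

/-- The (partial) run of the automaton on a term: `δ` extended to terms. -/
def DTA.run {F : Type} {ar : F → ℕ} (A : DTA F ar) : Tm F ar → Option A.Q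
  | .app f args => (finSeq fun i => A.run (args i)).bind fun qs => A.δ f qs

/-- The language accepted by the automaton. -/
def DTA.lang {F : Type} {ar : F → ℕ} (A : DTA F ar) : Set (Tm F ar) :=
  { t | ∃ q ∈ A.final, A.run t = some q }

/-- A tree language is regular if it is the language of some deterministic
bottom-up tree automaton. -/
def IsRegularTreeLang {F : Type} {ar : F → ℕ} (L : Set (Tm F ar)) : Prop :=
  ∃ A : DTA F ar, L = A.lang

/-!
The states are the `E`-classes of the terms of `C`, and `δ(f, [c₁], …, [c_k])` is the class of
some term of `C` that is `E`-equal to `f(c₁, …, c_k)`, undefined if there is none. Every term of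
`C` runs to its own class. Conversely, an automaton is itself a structure on `Option Q` (with
`none` for "undefined"), and its evaluation is its run; this one satisfies the equations of `E`
because they relate terms of `C`, so `E`-equal terms have equal runs.
-/

section EquationalConsequence

variable {F : Type} {ar : F → ℕ} {E : Set (Tm F ar × Tm F ar)}

theorem EqCons.refl (E : Set (Tm F ar × Tm F ar)) (s : Tm F ar) : EqCons E s s :=
  fun _ _ => rfl

theorem EqCons.symm {s t : Tm F ar} (h : EqCons E s t) : EqCons E t s :=
  fun M hM => (h M hM).symm

theorem EqCons.trans {s t u : Tm F ar} (h₁ : EqCons E s t) (h₂ : EqCons E t u) :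
    EqCons E s u :=
  fun M hM => (h₁ M hM).trans (h₂ M hM)

theorem EqCons.app {f : F} {a b : Fin (ar f) → Tm F ar} (h : ∀ i, EqCons E (a i) (b i)) :
    EqCons E (.app f a) (.app f b) :=
  fun M hM => congrArg (M.interp f) (funext fun i => h i M hM)

theorem EqCons.equivalence (E : Set (Tm F ar × Tm F ar)) : Equivalence (EqCons E) :=
  ⟨EqCons.refl E, EqCons.symm, EqCons.trans⟩

theorem eqCons_of_mem {e : Tm F ar × Tm F ar} (he : e ∈ E) : EqCons E e.1 e.2 :=
  fun _ hM => hM e he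

def eqConsSetoid (E : Set (Tm F ar × Tm F ar)) (C : Set (Tm F ar)) : Setoid C :=
  Setoid.comap Subtype.val ⟨EqCons E, EqCons.equivalence E⟩

end EquationalConsequence

theorem finSeq_eq_some_of_forall {Q : Type} :
    ∀ {n : ℕ} {f : Fin n → Option Q} {g : Fin n → Q}, (∀ i, f i = some (g i)) →
      finSeq f = some g
  | 0, _, g, _ => congrArg some (funext fun i => i.elim0)
  | n + 1, f, g, h => by
    simp only [finSeq, h 0, finSeq_eq_some_of_forall (fun i : Fin n => h i.succ),
      Option.bind_some, Option.map_some]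
    exact congrArg some (Fin.cons_self_tail g)

namespace DTA

variable {F : Type} {ar : F → ℕ}

def toStr (A : DTA F ar) : Str F ar where
  D := Option A.Q
  nonemptyD := ⟨none⟩
  interp f d := (finSeq d).bind (A.δ f)

theorem eval_toStr (A : DTA F ar) (t : Tm F ar) : t.eval A.toStr = A.run t := by
  induction t with
  | app f args ih =>
    show (finSeq fun i => (args i).eval A.toStr).bind (A.δ f) = _
    simp only [ih]
    rfl

theorem run_eq_of_eqCons (A : DTA F ar) {E : Set (Tm F ar × Tm F ar)}
    (hA : ∀ e ∈ E, A.run e.1 = A.run e.2) {s t : Tm F ar} (h : EqCons E s t) :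
    A.run s = A.run t :=
  (A.eval_toStr s).symm.trans <| (h A.toStr fun e he =>
    (A.eval_toStr e.1).trans <| (hA e he).trans (A.eval_toStr e.2).symm).trans (A.eval_toStr t)

end DTA

section CongruenceAutomaton

variable {F : Type} {ar : F → ℕ} {E : Set (Tm F ar × Tm F ar)} {C : Set (Tm F ar)}

open Classical in
noncomputable def congrDelta (E : Set (Tm F ar × Tm F ar)) (C : Set (Tm F ar)) (f : F)
    (qs : Fin (ar f) → Quotient (eqConsSetoid E C)) : Option (Quotient (eqConsSetoid E C)) :=
  if h : ∃ c : C, EqCons E c (.app f fun i => ((qs i).out : C)) then some ⟦h.choose⟧ else none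

theorem congrDelta_mk {f : F} {args : Fin (ar f) → C} {c : C}
    (hc : EqCons E c (.app f fun i => (args i : Tm F ar))) :
    congrDelta E C f (fun i => ⟦args i⟧) = some ⟦c⟧ := by
  have hout : EqCons E (.app f fun i => ((⟦args i⟧ : Quotient (eqConsSetoid E C)).out : C))
      (.app f fun i => (args i : Tm F ar)) :=
    EqCons.app fun i => Quotient.mk_out (s := eqConsSetoid E C) (args i)
  have hex : ∃ c' : C, EqCons E c' (.app f fun i => ((⟦args i⟧ : Quotient _).out : C)) :=
    ⟨c, hc.trans hout.symm⟩
  rw [congrDelta, dif_pos hex, Option.some_inj, Quotient.eq]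
  exact hex.choose_spec.trans (hout.trans hc.symm)

noncomputable def congrAut (E : Set (Tm F ar × Tm F ar)) (C : Set (Tm F ar)) (hC : C.Finite) :
    DTA F ar :=
  haveI := hC.to_subtype
  { Q := Quotient (eqConsSetoid E C)
    fintypeQ := Fintype.ofFinite _
    δ := congrDelta E C
    final := ∅ }

variable {hC : C.Finite}

theorem congrAut_run_of_mem (hclosed : SubtermClosed C) (t : Tm F ar) (ht : t ∈ C) :
    (congrAut E C hC).run t = some ⟦⟨t, ht⟩⟧ := by
  induction t with
  | app f args ih =>
    have hargs i : args i ∈ C := hclosed _ ht _ (.step f args i (.refl _))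
    show (finSeq fun i => (congrAut E C hC).run (args i)).bind (congrDelta E C f) = _
    rw [finSeq_eq_some_of_forall fun i => ih i (hargs i)]
    exact congrDelta_mk (args := fun i => ⟨args i, hargs i⟩) (EqCons.refl E _)

theorem congrAut_run_eq_of_eqCons (hclosed : SubtermClosed C)
    (hEC : ∀ e ∈ E, e.1 ∈ C ∧ e.2 ∈ C) {s t : Tm F ar} (h : EqCons E s t) :
    (congrAut E C hC).run s = (congrAut E C hC).run t := by
  refine (congrAut E C hC).run_eq_of_eqCons (fun e he => ?_) h
  rw [congrAut_run_of_mem hclosed _ (hEC e he).1, congrAut_run_of_mem hclosed _ (hEC e he).2]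
  exact congrArg some (Quotient.sound (eqCons_of_mem he))

end CongruenceAutomaton

theorem exists_congruence_automaton_general {F : Type} (ar : F → ℕ)
    (E : Set (Tm F ar × Tm F ar))
    (C : Set (Tm F ar)) (hC : C.Finite) (hclosed : SubtermClosed C)
    (hEC : ∀ e ∈ E, e.1 ∈ C ∧ e.2 ∈ C) :
    ∃ A : DTA F ar,
      (∀ q : A.Q, ∃ s ∈ C, A.run s = some q) ∧
      ∀ s t : Tm F ar,
        (∃ s' ∈ C, EqCons E s s') → (∃ t' ∈ C, EqCons E t t') →
          (A.run s).isSome ∧ (A.run t).isSome ∧ (EqCons E s t ↔ A.run s = A.run t) := by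
  have hrun {s s' : Tm F ar} (hs' : s' ∈ C) (h : EqCons E s s') :
      (congrAut E C hC).run s = some ⟦⟨s', hs'⟩⟧ :=
    (congrAut_run_eq_of_eqCons hclosed hEC h).trans (congrAut_run_of_mem hclosed s' hs')
  refine ⟨congrAut E C hC, Quotient.ind fun c => ⟨c, c.2, hrun c.2 (.refl E c)⟩, ?_⟩
  rintro s t ⟨s', hs', hss'⟩ ⟨t', ht', htt'⟩
  rw [hrun hs' hss', hrun ht' htt']
  refine ⟨rfl, rfl, Iff.trans ?_ (Option.some_inj.trans Quotient.eq).symm⟩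
  exact ⟨fun h => hss'.symm.trans (h.trans htt'), fun h => hss'.trans (h.trans htt'.symm)⟩

/-- **Theorem `aut_thm`.**  Let `E` be a finite set of ground equations over
the finite signature `Σ = (F, ar)`, and `C` a finite subterm-closed set of ground terms
containing all terms occurring in `E`.  Then there is a deterministic bottom-up tree
automaton `(Q, δ)` (no accepting states needed) whose states are exactly the
`E`-equivalence classes of the terms of `C`: every state is reached by some term of `C`,
and for all ground terms `s, t` that are `E`-equivalent to some terms `s', t' ∈ C`,
`δ(s)` and `δ(t)` are defined and `E ⊢ s = t` holds iff `δ(s) = δ(t)`. -/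
theorem exists_congruence_automaton {F : Type} [Fintype F] (ar : F → ℕ)
    (E : Set (Tm F ar × Tm F ar)) (hE : E.Finite)
    (C : Set (Tm F ar)) (hC : C.Finite) (hclosed : SubtermClosed C)
    (hEC : ∀ e ∈ E, e.1 ∈ C ∧ e.2 ∈ C) :
    ∃ A : DTA F ar,
      (∀ q : A.Q, ∃ s ∈ C, A.run s = some q) ∧
      ∀ s t : Tm F ar,
        (∃ s' ∈ C, EqCons E s s') → (∃ t' ∈ C, EqCons E t t') →
          (A.run s).isSome ∧ (A.run t).isSome ∧ (EqCons E s t ↔ A.run s = A.run t) :=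
  exists_congruence_automaton_general ar E C hC hclosed hEC

end SyGuS
end

section
/- Let A = (Q, δ, QF) be a deterministic bottom-up tree automaton over Σ ∪ {x1,…,xk} (with x1,…,xk treated as constants) such that every state q ∈ Q satisfies q = δ(u_q) for some term u_q that is a subterm of some member of L(A). Then there exists a regular clause ψ_A over Σ extended by finitely many fresh constants, with a distinguished function symbol f of arity k, such that {w ∈ T(Σ, {x1,…,xk}) : ψ_A{w/f} is valid} = L(A); moreover ψ_A can be taken of the form (⋀_{e ∈ N} e) → (⋁_{e ∈ P} e) where N is a finite set of ground equations not containing f and P is a finite set of equations each with exactly one occurrence of f. -/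
namespace SyGuS

/-- Number of occurrences of the distinguished symbol `f` (the `Sum.inr` symbol) in a term. -/
def Tm.countF {F : Type} {ar : F → ℕ} {k : ℕ} : Tm (F ⊕ Unit) (fAr ar k) → ℕ
  | .app (Sum.inl _) args => ∑ i, Tm.countF (args i)
  | .app (Sum.inr _) args => 1 + ∑ i, Tm.countF (args i)

/-- A literal: a (non-negated if `pos`, negated otherwise) equation between terms. -/
structure Lit (F : Type) (ar : F → ℕ) : Type where
  pos : Bool
  lhs : Tm F ar
  rhs : Tm F ar

def Lit.holds {F : Type} {ar : F → ℕ} (M : Str F ar) (l : Lit F ar) : Prop :=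
  if l.pos then l.lhs.eval M = l.rhs.eval M else l.lhs.eval M ≠ l.rhs.eval M

/-- A clause: a disjunction of (possibly negated) equations, ITE-free by construction. -/
abbrev Clause (F : Type) (ar : F → ℕ) := List (Lit F ar)

def Clause.holds {F : Type} {ar : F → ℕ} (M : Str F ar) (c : Clause F ar) : Prop :=
  ∃ l ∈ c, l.holds M

/-- A clause is valid if it holds in every nonempty structure. -/
def Clause.valid {F : Type} {ar : F → ℕ} (c : Clause F ar) : Prop :=
  ∀ M : Str F ar, c.holds M

/-- Number of occurrences of `f` in a literal (an equation). -/
def Lit.countF {F : Type} {ar : F → ℕ} {k : ℕ} (l : Lit (F ⊕ Unit) (fAr ar k)) : ℕ :=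
  l.lhs.countF + l.rhs.countF

/-- Case-1 regular clause: every equation has at most one occurrence of `f`,
and `f` occurs only in non-negated equations. -/
def Clause.Case1 {F : Type} {ar : F → ℕ} {k : ℕ} (c : Clause (F ⊕ Unit) (fAr ar k)) : Prop :=
  (∀ l ∈ c, l.countF ≤ 1) ∧ (∀ l ∈ c, l.pos = false → l.countF = 0)

/-- Case-2 regular clause: every equation has at most one occurrence of `f`, and `f`
occurs in exactly one negated equation of the clause and nowhere else. -/
def Clause.Case2 {F : Type} {ar : F → ℕ} {k : ℕ} (c : Clause (F ⊕ Unit) (fAr ar k)) : Prop :=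
  (∀ l ∈ c, l.countF ≤ 1) ∧ (∀ l ∈ c, l.pos = true → l.countF = 0) ∧
  (c.filter (fun l => l.pos = false ∧ l.countF ≠ 0)).length = 1

/-- A regular clause is one of case 1 or case 2. -/
def Clause.Regular {F : Type} {ar : F → ℕ} {k : ℕ} (c : Clause (F ⊕ Unit) (fAr ar k)) : Prop :=
  c.Case1 ∨ c.Case2

/-- Second-order substitution `·{w/f}` on literals. -/
def Lit.soSubst {F : Type} {ar : F → ℕ} {k : ℕ} (w : Tm (F ⊕ Fin k) (varAr ar k))
    (l : Lit (F ⊕ Unit) (fAr ar k)) : Lit F ar :=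
  ⟨l.pos, Tm.soSubst w l.lhs, Tm.soSubst w l.rhs⟩

/-- Second-order substitution `·{w/f}` on clauses. -/
def Clause.soSubst {F : Type} {ar : F → ℕ} {k : ℕ} (w : Tm (F ⊕ Fin k) (varAr ar k))
    (c : Clause (F ⊕ Unit) (fAr ar k)) : Clause F ar :=
  c.map (Lit.soSubst w)

/-- A regular-EUF formula: a finite conjunction of regular clauses. -/
structure RegEUF (F : Type) (ar : F → ℕ) (k : ℕ) : Type where
  clauses : List (Clause (F ⊕ Unit) (fAr ar k))
  regular : ∀ c ∈ clauses, c.Regular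

/-- `w` is a solution for a regular-EUF formula if every clause becomes valid
after substituting `w` for `f`. -/
def RegEUF.solves {F : Type} {ar : F → ℕ} {k : ℕ} (φ : RegEUF F ar k)
    (w : Tm (F ⊕ Fin k) (varAr ar k)) : Prop :=
  ∀ c ∈ φ.clauses, (c.soSubst w).valid

/-- Embedding of candidate expressions over `Σ ∪ {x₁,…,x_k}` into the terms over the
extension `Σ ∪ {c₁,…,c_c} ∪ {x₁,…,x_k}` of `Σ` by `c` fresh constants. -/
def embedW {F : Type} {ar : F → ℕ} {k c : ℕ} :
    Tm (F ⊕ Fin k) (varAr ar k) →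
      Tm ((F ⊕ Fin c) ⊕ Fin k) (varAr (Sum.elim ar fun _ => 0) k) :=
  Tm.rename (Sum.map Sum.inl id) (by rintro (g | i) <;> rfl)

/-! Take a fresh constant `c_o` for each `o ∈ Q ∪ {⊥}` and let `ψ_A` be
`(⋀ g(c_{q₁},…,c_{qₙ}) = c_q) → ⋁_{q final} f(c_{δ(x₁)},…,c_{δ(x_k)}) = c_q`, the conjunction
ranging over the transitions `δ(g, q₁,…,qₙ) = q` of `A` on `Σ`. In a model of the premises,
`w(c_{δ(x₁)},…,c_{δ(x_k)})` evaluates to `c_{δ(w)}` whenever the run on `w` is defined, so every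
`w ∈ L(A)` is a solution. Conversely, interpreting the symbols on `Q ∪ {⊥}` by `δ` (with `⊥`
for undefined) satisfies every premise and evaluates each substituted `w` to its run, so
validity forces `w` to be accepted. -/

lemma finSeq_eq_some_iff {Q : Type} {n : ℕ} {os : Fin n → Option Q} {qs : Fin n → Q} :
    finSeq os = some qs ↔ ∀ i, os i = some (qs i) := by
  induction n with
  | zero =>
    simp only [finSeq, Option.some.injEq, IsEmpty.forall_iff, iff_true]
    exact funext (·.elim0)
  | succ n ih =>
    simp only [finSeq, Option.bind_eq_some_iff, Option.map_eq_some_iff, ih, Fin.forall_fin_succ]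
    constructor
    · rintro ⟨q, hq, qs', hqs', rfl⟩
      simpa using ⟨hq, hqs'⟩
    · rintro ⟨h0, hs⟩
      exact ⟨qs 0, h0, Fin.tail qs, hs, Fin.cons_self_tail qs⟩

lemma finSeq_some {Q : Type} {n : ℕ} (qs : Fin n → Q) : finSeq (fun i => some (qs i)) = some qs :=
  finSeq_eq_some_iff.mpr fun _ => rfl

section Runs

variable {G : Type} {arG : G → ℕ} (A : DTA G arG)

lemma DTA.eval_eq_of_run_eq_some (N : Str G arG) (ι : A.Q → N.D)
    (hδ : ∀ g qs q, A.δ g qs = some q → N.interp g (fun i => ι (qs i)) = ι q) :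
    ∀ t q, A.run t = some q → t.eval N = ι q
  | .app g args, q, hrun => by
    obtain ⟨qs, hqs, hq⟩ := Option.bind_eq_some_iff.mp hrun
    have hargs := finSeq_eq_some_iff.mp hqs
    rw [Tm.eval, ← hδ g qs q hq]
    exact congrArg _ (funext fun i => DTA.eval_eq_of_run_eq_some N ι hδ _ _ (hargs i))

lemma DTA.eval_eq_run (N : Str G arG) (ι : Option A.Q → N.D)
    (hδ : ∀ g os, N.interp g (fun i => ι (os i)) = ι ((finSeq os).bind (A.δ g))) :
    ∀ t, t.eval N = ι (A.run t)
  | .app g args => by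
    rw [Tm.eval, DTA.run, ← hδ]
    exact congrArg _ (funext fun i => DTA.eval_eq_run N ι hδ (args i))

end Runs

section Embedding

variable {F : Type} {ar : F → ℕ} {k c : ℕ}

def Str.withVars (M : Str (F ⊕ Fin c) (varAr ar c)) (v : Fin k → M.D) :
    Str (F ⊕ Fin k) (varAr ar k) where
  D := M.D
  interp
    | .inl g => M.interp (.inl g)
    | .inr i => fun _ => v i

lemma Tm.eval_instVars_embedW (M : Str (F ⊕ Fin c) (varAr ar c))
    (σ : Fin k → Tm (F ⊕ Fin c) (varAr ar c)) :
    ∀ t : Tm (F ⊕ Fin k) (varAr ar k),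
      (Tm.instVars σ (embedW t)).eval M = t.eval (M.withVars fun i => (σ i).eval M)
  | .app (.inl g) args => by
    show M.interp (.inl g) _ = M.interp (.inl g) _
    exact congrArg _ (funext fun i => Tm.eval_instVars_embedW M σ (args i))
  | .app (.inr i) _ => rfl

def Tm.liftF : Tm F ar → Tm (F ⊕ Unit) (fAr ar k) :=
  Tm.rename Sum.inl fun _ => rfl

@[simp]
lemma Tm.soSubst_liftF (w : Tm (F ⊕ Fin k) (varAr ar k)) :
    ∀ t : Tm F ar, Tm.soSubst w t.liftF = t
  | .app g args => by
    show Tm.app g _ = _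
    exact congrArg _ (funext fun i => Tm.soSubst_liftF w (args i))

@[simp]
lemma Tm.countF_liftF : ∀ t : Tm F ar, (t.liftF (k := k)).countF = 0
  | .app g args => by
    show ∑ i, _ = 0
    exact Finset.sum_eq_zero fun i _ => Tm.countF_liftF (args i)

end Embedding

section AutomatonClause

variable {F : Type} {ar : F → ℕ} {k : ℕ} (A : DTA (F ⊕ Fin k) (varAr ar k))

noncomputable def stateConst (o : Option A.Q) :
    Tm (F ⊕ Fin (Fintype.card (Option A.Q))) (varAr ar (Fintype.card (Option A.Q))) :=
  .app (.inr (Fintype.equivFin _ o)) Fin.elim0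

noncomputable def transitionLit (g : F) (qs : Fin (ar g) → A.Q) (q : A.Q) :
    Lit ((F ⊕ Fin (Fintype.card (Option A.Q))) ⊕ Unit)
      (fAr (varAr ar (Fintype.card (Option A.Q))) k) :=
  ⟨false, (Tm.app (Sum.inl g) fun i : Fin (ar g) => stateConst A (qs i)).liftF,
    (stateConst A q).liftF⟩

noncomputable def acceptLit (q : A.Q) :
    Lit ((F ⊕ Fin (Fintype.card (Option A.Q))) ⊕ Unit)
      (fAr (varAr ar (Fintype.card (Option A.Q))) k) :=
  ⟨true, .app (.inr ()) fun i => (stateConst A (A.δ (.inr i) Fin.elim0)).liftF,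
    (stateConst A q).liftF⟩

noncomputable def runModel :
    Str (F ⊕ Fin (Fintype.card (Option A.Q))) (varAr ar (Fintype.card (Option A.Q))) where
  D := Option A.Q
  interp
    | .inl g => fun os => (finSeq os).bind (A.δ (.inl g))
    | .inr j => fun _ => (Fintype.equivFin _).symm j

@[simp]
lemma eval_stateConst_runModel (o : Option A.Q) : (stateConst A o).eval (runModel A) = o := by
  simp [stateConst, Tm.eval, runModel]

variable [Fintype F]

open Classical in
noncomputable def automatonClause :
    Clause ((F ⊕ Fin (Fintype.card (Option A.Q))) ⊕ Unit)
      (fAr (varAr ar (Fintype.card (Option A.Q))) k) :=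
  (Finset.univ : Finset ((g : F) × (Fin (ar g) → A.Q))).toList.filterMap
      (fun p => (A.δ (.inl p.1) p.2).map (transitionLit A p.1 p.2)) ++
    (Finset.univ.filter (· ∈ A.final)).toList.map (acceptLit A)

lemma mem_automatonClause {l} :
    l ∈ automatonClause A ↔
      (∃ (g : F) (qs : Fin (ar g) → A.Q) (q : A.Q), A.δ (.inl g) qs = some q ∧
        transitionLit A g qs q = l) ∨
        ∃ q ∈ A.final, acceptLit A q = l := by
  simp [automatonClause, Option.map_eq_some_iff]

lemma countF_eq_toNat_of_mem_automatonClause :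
    ∀ l ∈ automatonClause A, l.countF = l.pos.toNat := by
  intro l hl
  rcases (mem_automatonClause A).mp hl with ⟨g, qs, q, -, rfl⟩ | ⟨q, -, rfl⟩
  · simp [transitionLit, Lit.countF]
  · simp [acceptLit, Lit.countF, Tm.countF]

lemma holds_soSubst_automatonClause_iff
    (M : Str (F ⊕ Fin (Fintype.card (Option A.Q))) (varAr ar (Fintype.card (Option A.Q))))
    (w : Tm ((F ⊕ Fin (Fintype.card (Option A.Q))) ⊕ Fin k)
      (varAr (varAr ar (Fintype.card (Option A.Q))) k)) :
    ((automatonClause A).soSubst w).holds M ↔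
      (∃ (g : F) (qs : Fin (ar g) → A.Q) (q : A.Q), A.δ (.inl g) qs = some q ∧
        M.interp (.inl g) (fun i => (stateConst A (qs i)).eval M) ≠ (stateConst A q).eval M) ∨
      ∃ q ∈ A.final, (Tm.instVars (fun i => stateConst A (A.δ (.inr i) Fin.elim0)) w).eval M =
        (stateConst A q).eval M := by
  simp only [Clause.holds, Clause.soSubst, List.mem_map, mem_automatonClause, ↓existsAndEq,
    transitionLit, acceptLit, Lit.soSubst, Lit.holds, Tm.soSubst, Tm.soSubst_liftF, or_and_right, exists_or, and_true, ne_eq, Bool.false_eq_true, ↓reduceIte]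
  rfl

lemma mem_lang_of_valid_soSubst_automatonClause (w : Tm (F ⊕ Fin k) (varAr ar k))
    (h : ((automatonClause A).soSubst (embedW w)).valid) : w ∈ A.lang := by
  obtain ⟨g, qs, q, hq, hne⟩ | ⟨q, hq, heval⟩ :=
    (holds_soSubst_automatonClause_iff A _ _).mp (h (runModel A))
  · refine absurd ?_ hne
    simp only [eval_stateConst_runModel]
    exact (congrArg (Option.bind · (A.δ (.inl g))) (finSeq_some qs)).trans hq
  · refine ⟨q, hq, ?_⟩
    rw [Tm.eval_instVars_embedW, eval_stateConst_runModel] at heval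
    rwa [DTA.eval_eq_run A _ id ?_] at heval
    rintro (g | i) os
    · rfl
    · exact eval_stateConst_runModel A _

lemma valid_soSubst_automatonClause_of_mem_lang (w : Tm (F ⊕ Fin k) (varAr ar k))
    (hw : w ∈ A.lang) : ((automatonClause A).soSubst (embedW w)).valid := by
  intro M
  obtain ⟨q, hq, hrun⟩ := hw
  rw [holds_soSubst_automatonClause_iff]
  by_contra! hM
  refine hM.2 q hq ?_
  rw [Tm.eval_instVars_embedW]
  refine DTA.eval_eq_of_run_eq_some A (M.withVars _) (fun q => (stateConst A q).eval M) ?_ w q hrun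
  rintro (g | i) qs q' hq'
  · exact hM.1 g qs q' hq'
  · show (stateConst A (A.δ (.inr i) Fin.elim0)).eval M = _
    rw [Subsingleton.elim Fin.elim0 qs, hq']

end AutomatonClause

theorem automaton_to_regular_clause_general {F : Type} [Fintype F] (ar : F → ℕ) (k : ℕ)
    (A : DTA (F ⊕ Fin k) (varAr ar k)) :
    ∃ (c : ℕ) (ψ : Clause ((F ⊕ Fin c) ⊕ Unit) (fAr (Sum.elim ar fun _ => 0) k)),
      ψ.Case1 ∧
      (∀ l ∈ ψ, l.pos = false → l.countF = 0) ∧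
      (∀ l ∈ ψ, l.pos = true → l.countF = 1) ∧
      {w : Tm (F ⊕ Fin k) (varAr ar k) | (ψ.soSubst (embedW w)).valid} = A.lang := by
  have hcount := countF_eq_toNat_of_mem_automatonClause A
  have hneg : ∀ l ∈ automatonClause A, l.pos = false → l.countF = 0 := fun l hl hpos => by
    simp [hcount l hl, hpos]
  refine ⟨_, automatonClause A, ⟨fun l hl => ?_, hneg⟩, hneg, fun l hl hpos => ?_, ?_⟩
  · exact (hcount l hl).trans_le (Bool.toNat_le _)
  · simp [hcount l hl, hpos]
  · ext w
    exact ⟨mem_lang_of_valid_soSubst_automatonClause A w,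
      valid_soSubst_automatonClause_of_mem_lang A w⟩

/-- **Lemma `aut_to_formula`.**  Let `A = (Q, δ, Q_F)` be a deterministic
bottom-up tree automaton over `Σ ∪ {x₁,…,x_k}` such that every state is `δ(u_q)` for some
term `u_q` that is a subterm of a member of `L(A)`.  Then there is a regular clause `ψ_A`
over `Σ` extended by finitely many fresh constants, with a distinguished function symbol
`f` of arity `k`, of the form `(⋀_{e ∈ N} e) → (⋁_{e ∈ P} e)` (negated equations `N` not
containing `f`, positive equations `P` each with exactly one occurrence of `f`), whose
solution set `{w ∈ T(Σ,{x₁,…,x_k}) : ψ_A{w/f} valid}` is exactly `L(A)`. -/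
theorem automaton_to_regular_clause {F : Type} [Fintype F] (ar : F → ℕ) (k : ℕ)
    (A : DTA (F ⊕ Fin k) (varAr ar k))
    (hQ : ∀ q : A.Q, ∃ u, A.run u = some q ∧ ∃ t ∈ A.lang, u.Subterm t) :
    ∃ (c : ℕ) (ψ : Clause ((F ⊕ Fin c) ⊕ Unit) (fAr (Sum.elim ar fun _ => 0) k)),
      ψ.Case1 ∧
      (∀ l ∈ ψ, l.pos = false → l.countF = 0) ∧
      (∀ l ∈ ψ, l.pos = true → l.countF = 1) ∧
      {w : Tm (F ⊕ Fin k) (varAr ar k) | (ψ.soSubst (embedW w)).valid} = A.lang :=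
  automaton_to_regular_clause_general ar k A

end SyGuS
end

section
/- Let T be a finite alphabet, n ≥ 1, and c : T → (Fin n → Bool) an injective fixed-length encoding; extend c letterwise to ĉ : List T → List Bool by concatenating the n-bit blocks. For every context-free grammar G over terminal alphabet T with no ε-productions (every production has a nonempty right-hand side), there exists a regular tree grammar G′ over the ranked alphabet {@ : 2, 0 : 0, 1 : 0} such that {⟦t⟧ : t ∈ L(G′)} = {ĉ(w) : w ∈ L(G)}. Consequently, for two such context-free grammars G1 and G2 with corresponding tree grammars G1′ and G2′: L(G1) ∩ L(G2) ≠ ∅ if and only if there exist t1 ∈ L(G1′) and t2 ∈ L(G2′) with ⟦t1⟧ = ⟦t2⟧. -/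
/-!
The tree grammar takes as nonterminals the sublists of the start string and of the right-hand
sides of `G`: a nonterminal `α` rewrites to `β @ γ` whenever `α ⇒* β γ` in `G`, and to a tree
denoting `ĉ(a)` whenever `α ⇒* a`. Soundness is then immediate. For completeness, parse a word
symbol by symbol: a nonempty form `s β` is split as `[s] @ β`, and a nonterminal `A` continues
with the right-hand side of the rule applied to it, which is again a nonempty sublist because `G`
has no ε-productions. Letting `α ⇒* β` rather than `α = β` absorbs chains of unit productions.
The second part holds because `ĉ` is injective when `n ≥ 1`.
-/

namespace SyGuS

/-- Regular tree grammars: finitely many productions rewriting a nonterminal `A` into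
`g(t₁,…,t_k)`, where each `tᵢ` is a nonterminal or a ground term. -/
structure RTG (F : Type) (ar : F → ℕ) : Type 1 where
  N : Type
  [fintypeN : Fintype N]
  start : N
  prods : Set (N × Σ g : F, (Fin (ar g) → N ⊕ Tm F ar))
  finite_prods : prods.Finite

attribute [instance] RTG.fintypeN

/-- Derivability of a term from a nonterminal of the grammar. -/
inductive RTG.Derives {F : Type} {ar : F → ℕ} (G : RTG F ar) : G.N → Tm F ar → Prop
  | step (A : G.N) (g : F) (args : Fin (ar g) → G.N ⊕ Tm F ar) (ts : Fin (ar g) → Tm F ar)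
      (h : (A, ⟨g, args⟩) ∈ G.prods)
      (hnt : ∀ i B, args i = Sum.inl B → G.Derives B (ts i))
      (htm : ∀ i u, args i = Sum.inr u → ts i = u) :
      G.Derives A (.app g ts)

/-- The language of a regular tree grammar: terms derivable from the start symbol. -/
def RTG.lang {F : Type} {ar : F → ℕ} (G : RTG F ar) : Set (Tm F ar) :=
  { t | G.Derives G.start t }

/-- The ranked alphabet `{@ : 2, 0 : 0, 1 : 0}` of bitstring trees. -/
inductive Sym3 : Type
  | cat | b0 | b1
  deriving DecidableEq

instance : Fintype Sym3 := ⟨{Sym3.cat, Sym3.b0, Sym3.b1}, by intro s; cases s <;> simp⟩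

def ar3 : Sym3 → ℕ
  | .cat => 2
  | .b0 => 0
  | .b1 => 0

/-- The structure of bitstrings: `⟦0⟧ = [false]`, `⟦1⟧ = [true]`,
`⟦t₁ @ t₂⟧ = ⟦t₁⟧ ++ ⟦t₂⟧`. -/
def bitStr : Str Sym3 ar3 where
  D := List Bool
  nonemptyD := inferInstance
  interp
    | .cat => fun v => v ⟨0, by decide⟩ ++ v ⟨1, by decide⟩
    | .b0 => fun _ => [false]
    | .b1 => fun _ => [true]

/-- Evaluation `⟦·⟧` of a bitstring tree. -/
def beval (t : Tm Sym3 ar3) : List Bool := t.eval bitStr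

/-- The letterwise extension `ĉ` of the fixed-length encoding `c`. -/
def chat {T : Type} (n : ℕ) (c : T → (Fin n → Bool)) (w : List T) : List Bool :=
  w.flatMap fun t => List.ofFn (c t)

/-- The tree grammar `G'` corresponds to the context-free grammar `G` (under the
encoding `c`): the bitstrings denoted by the trees of `L(G')` are exactly the encodings
of the words of `L(G)`. -/
def Corresponds {T : Type} (n : ℕ) (c : T → (Fin n → Bool))
    (G : ContextFreeGrammar T) (G' : RTG Sym3 ar3) : Prop :=
  beval '' G'.lang = chat n c '' G.language

end SyGuS

theorem List.finite_setOf_sublist {α : Type*} (l : List α) :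
    {m : List α | m.Sublist l}.Finite := by
  simpa only [List.mem_sublists] using l.sublists.finite_toSet

namespace ContextFreeGrammar

variable {T : Type*} {g : ContextFreeGrammar T}

/-- `g.Yields α w`: the sentential form `α` derives the word `w`, parsed symbol by symbol.
Unlike `g.Derives α (w.map .terminal)`, it splits along `α = β ++ γ` (`Yields.exists_of_append`). -/
inductive Yields (g : ContextFreeGrammar T) : List (Symbol T g.NT) → List T → Prop
  | nil : g.Yields [] []
  | terminal (a : T) {α : List (Symbol T g.NT)} {w : List T} :
      g.Yields α w → g.Yields (.terminal a :: α) (a :: w)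
  | nonterminal {r : ContextFreeRule T g.NT} (hr : r ∈ g.rules) {α : List (Symbol T g.NT)}
      {u w : List T} : g.Yields r.output u → g.Yields α w →
        g.Yields (.nonterminal r.input :: α) (u ++ w)

theorem Yields.append {α β : List (Symbol T g.NT)} {u v : List T} (hα : g.Yields α u)
    (hβ : g.Yields β v) : g.Yields (α ++ β) (u ++ v) := by
  induction hα with
  | nil => exact hβ
  | terminal a _ ih => exact .terminal a ih
  | nonterminal hr hout _ _ ih => simpa only [List.append_assoc] using .nonterminal hr hout ih

theorem Yields.exists_of_append {α β : List (Symbol T g.NT)} {w : List T}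
    (h : g.Yields (α ++ β) w) : ∃ u v, w = u ++ v ∧ g.Yields α u ∧ g.Yields β v := by
  induction α generalizing w with
  | nil => exact ⟨[], w, rfl, .nil, h⟩
  | cons s α ih =>
    cases h with
    | terminal a h =>
      obtain ⟨u, v, rfl, hu, hv⟩ := ih h
      exact ⟨a :: u, v, rfl, .terminal a hu, hv⟩
    | nonterminal hr hout h =>
      obtain ⟨u, v, rfl, hu, hv⟩ := ih h
      exact ⟨_ ++ u, v, (List.append_assoc ..).symm, .nonterminal hr hout hu, hv⟩

theorem yields_map_terminal (w : List T) : g.Yields (w.map .terminal) w := by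
  induction w with
  | nil => exact .nil
  | cons a w ih => exact .terminal a ih

theorem Yields.of_produces {α β : List (Symbol T g.NT)} {w : List T} (h : g.Produces α β)
    (hβ : g.Yields β w) : g.Yields α w := by
  obtain ⟨r, hr, hrw⟩ := h
  obtain ⟨p, q, rfl, rfl⟩ := hrw.exists_parts
  obtain ⟨u', v, rfl, hu', hv⟩ := hβ.exists_of_append
  obtain ⟨u, o, rfl, hu, ho⟩ := hu'.exists_of_append
  have hA : g.Yields [.nonterminal r.input] o := List.append_nil o ▸ .nonterminal hr ho .nil
  exact (hu.append hA).append hv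

theorem Yields.of_derives {α β : List (Symbol T g.NT)} {w : List T} (h : g.Derives α β)
    (hβ : g.Yields β w) : g.Yields α w := by
  induction h using Relation.ReflTransGen.head_induction_on with
  | refl => exact hβ
  | head hp _ ih => exact ih.of_produces hp

theorem Derives.yields {α : List (Symbol T g.NT)} {w : List T}
    (h : g.Derives α (w.map .terminal)) : g.Yields α w :=
  Yields.of_derives h (yields_map_terminal w)

theorem Derives.append {α α' β β' : List (Symbol T g.NT)} (hα : g.Derives α α')
    (hβ : g.Derives β β') : g.Derives (α ++ β) (α' ++ β') :=
  (hα.append_right β).trans (hβ.append_left α')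

end ContextFreeGrammar

namespace SyGuS

section

variable {F : Type} {ar : F → ℕ}

def Tm.toRHS {N : Type} : Tm F ar → Σ g : F, Fin (ar g) → N ⊕ Tm F ar
  | .app g us => ⟨g, fun i => .inr (us i)⟩

theorem Tm.app_eq_of_toRHS_eq {N : Type} {u : Tm F ar} {g : F}
    {args : Fin (ar g) → N ⊕ Tm F ar} {ts : Fin (ar g) → Tm F ar} (h : u.toRHS = ⟨g, args⟩)
    (hts : ∀ i v, args i = .inr v → ts i = v) : Tm.app g ts = u := by
  obtain ⟨f, us⟩ := u
  obtain ⟨rfl, h⟩ := Sigma.mk.inj_iff.mp h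
  cases eq_of_heq h
  exact congrArg _ (funext fun i => hts i _ rfl)

namespace RTG

variable (G : RTG F ar)

theorem derives_of_mem_toRHS {A : G.N} {u : Tm F ar} (h : (A, u.toRHS) ∈ G.prods) :
    G.Derives A u := by
  obtain ⟨g, us⟩ := u
  exact .step A g _ us h (fun _ _ h => nomatch h) fun _ _ h => Sum.inr.inj h

end RTG

def bitTree : Bool → Tm Sym3 ar3
  | false => .app .b0 ![]
  | true => .app .b1 ![]

-- No bitstring tree denotes `[]`, so `treeOf []` is a junk value.
def treeOf : List Bool → Tm Sym3 ar3
  | [] => bitTree false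
  | [b] => bitTree b
  | b :: b' :: l => .app .cat ![bitTree b, treeOf (b' :: l)]

theorem beval_cat (t₁ t₂ : Tm Sym3 ar3) : beval (.app .cat ![t₁, t₂]) = beval t₁ ++ beval t₂ :=
  rfl

theorem beval_bitTree (b : Bool) : beval (bitTree b) = [b] := by
  cases b <;> rfl

theorem beval_treeOf {l : List Bool} (hl : l ≠ []) : beval (treeOf l) = l := by
  induction l using treeOf.induct with
  | case1 => exact absurd rfl hl
  | case2 b => exact beval_bitTree b
  | case3 b b' l ih => rw [treeOf, beval_cat, beval_bitTree, ih (List.cons_ne_nil _ _)]; rfl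

variable {T : Type} {n : ℕ} {c : T → Fin n → Bool}

theorem chat_append (w₁ w₂ : List T) : chat n c (w₁ ++ w₂) = chat n c w₁ ++ chat n c w₂ := by
  simp [chat]

theorem chat_singleton (a : T) : chat n c [a] = List.ofFn (c a) := by
  simp [chat]

theorem length_chat (w : List T) : (chat n c w).length = n * w.length := by
  simp [chat, mul_comm]

theorem chat_injective (hn : 0 < n) (hc : Function.Injective c) :
    Function.Injective (chat n c) := by
  intro w₁ w₂ h
  induction w₁ generalizing w₂ with
  | nil => simpa [length_chat, hn.ne', eq_comm] using congrArg List.length h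
  | cons a w₁ ih =>
    obtain _ | ⟨b, w₂⟩ := w₂
    · simpa [length_chat, hn.ne'] using congrArg List.length h
    · simp only [chat, List.flatMap_cons] at h ih
      obtain ⟨hab, hw⟩ := List.append_inj h (by simp)
      rw [hc (List.ofFn_injective hab), ih hw]

def codeTree (c : T → Fin n → Bool) (a : T) : Tm Sym3 ar3 := treeOf (List.ofFn (c a))

theorem beval_codeTree (hn : 0 < n) (a : T) : beval (codeTree c a) = chat n c [a] := by
  rw [codeTree, beval_treeOf (by simpa using hn.ne'), chat_singleton]

open ContextFreeGrammar

variable (g : ContextFreeGrammar T)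

def sublistForms : Set (List (Symbol T g.NT)) :=
  {α | α.Sublist [.nonterminal g.initial] ∨ ∃ r ∈ g.rules, α.Sublist r.output}

theorem finite_sublistForms : (sublistForms g).Finite := by
  have hrules : (⋃ r ∈ (g.rules : Set (ContextFreeRule T g.NT)),
      {α : List (Symbol T g.NT) | α.Sublist r.output}).Finite :=
    g.rules.finite_toSet.biUnion fun r _ => r.output.finite_setOf_sublist
  convert ([.nonterminal g.initial].finite_setOf_sublist).union hrules using 1
  ext α
  simp only [sublistForms, Set.mem_ofPred_eq, Set.mem_union, Set.mem_iUnion, Finset.mem_coe,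
    exists_prop]

variable {g}

theorem mem_sublistForms_of_sublist {α β : List (Symbol T g.NT)} (hβ : β ∈ sublistForms g)
    (h : α.Sublist β) : α ∈ sublistForms g :=
  hβ.imp h.trans fun ⟨r, hr, hβr⟩ => ⟨r, hr, h.trans hβr⟩

variable (n c g)

def bitTreeProds : Set (sublistForms g ×
    Σ s : Sym3, Fin (ar3 s) → sublistForms g ⊕ Tm Sym3 ar3) :=
  (fun p : sublistForms g × sublistForms g × sublistForms g =>
      (p.1, ⟨.cat, ![.inl p.2.1, .inl p.2.2]⟩)) ''
    {p | g.Derives p.1 (p.2.1 ++ p.2.2)} ∪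
  (fun p : sublistForms g × {a : T // [.terminal a] ∈ sublistForms g} =>
      (p.1, (codeTree c p.2).toRHS)) ''
    {p | g.Derives p.1 [.terminal p.2.1]}

noncomputable def bitTreeGrammar : RTG Sym3 ar3 where
  N := sublistForms g
  fintypeN := (finite_sublistForms g).fintype
  start := ⟨[.nonterminal g.initial], .inl (List.Sublist.refl _)⟩
  prods := bitTreeProds n c g
  finite_prods := by
    have := (finite_sublistForms g).to_subtype
    have : Finite {a : T // [.terminal a] ∈ sublistForms g} :=
      .of_injective (fun a => (⟨_, a.2⟩ : sublistForms g)) fun _ _ h =>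
        Subtype.ext (by simpa using h)
    exact ((Set.toFinite _).image _).union ((Set.toFinite _).image _)

variable {n c g}

theorem bitTreeGrammar_derives_cat {X Y Z : sublistForms g} {t₁ t₂ : Tm Sym3 ar3}
    (h : g.Derives X (Y.1 ++ Z.1)) (hY : (bitTreeGrammar n c g).Derives Y t₁)
    (hZ : (bitTreeGrammar n c g).Derives Z t₂) :
    (bitTreeGrammar n c g).Derives X (.app .cat ![t₁, t₂]) :=
  RTG.Derives.step (G := bitTreeGrammar n c g) X Sym3.cat ![.inl Y, .inl Z] ![t₁, t₂]
    (Or.inl ⟨(X, Y, Z), h, rfl⟩)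
    (fun i B hB => by fin_cases i <;> cases hB <;> assumption)
    (fun i u hu => by fin_cases i <;> cases hu)

theorem bitTreeGrammar_derives_codeTree {X : sublistForms g} {a : T}
    (ha : [.terminal a] ∈ sublistForms g) (h : g.Derives X [.terminal a]) :
    (bitTreeGrammar n c g).Derives X (codeTree c a) :=
  RTG.derives_of_mem_toRHS _ (.inr ⟨(X, ⟨a, ha⟩), h, rfl⟩)

theorem exists_derives_of_bitTreeGrammar_derives (hn : 0 < n) {X : (bitTreeGrammar n c g).N}
    {t : Tm Sym3 ar3} (h : (bitTreeGrammar n c g).Derives X t) :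
    ∃ w, g.Derives (Subtype.val X) (w.map .terminal) ∧ beval t = chat n c w := by
  induction h with
  | step X s args ts hmem hnt htm ih =>
    rcases hmem with ⟨⟨X', Y, Z⟩, hd, heq⟩ | ⟨⟨X', a⟩, hd, heq⟩
    · obtain ⟨rfl, hrhs⟩ := Prod.mk.inj heq
      obtain ⟨rfl, hargs⟩ := Sigma.mk.inj hrhs
      cases eq_of_heq hargs
      obtain ⟨u, hu, hbu⟩ := ih (0 : Fin 2) Y rfl
      obtain ⟨v, hv, hbv⟩ := ih (1 : Fin 2) Z rfl
      refine ⟨u ++ v, hd.trans ?_, ?_⟩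
      · simpa using hu.append hv
      · change beval (ts (0 : Fin 2)) ++ beval (ts (1 : Fin 2)) = _
        rw [hbu, hbv, chat_append]
    · obtain ⟨rfl, hrhs⟩ := Prod.mk.inj heq
      rw [Tm.app_eq_of_toRHS_eq hrhs htm]
      exact ⟨[a.1], hd, beval_codeTree hn a.1⟩

theorem exists_bitTreeGrammar_derives_of_yields (hn : 0 < n)
    (hε : ∀ r ∈ g.rules, r.output ≠ []) {α : List (Symbol T g.NT)} {w : List T}
    (h : g.Yields α w) (hα : α ∈ sublistForms g) (hne : α ≠ []) (X : sublistForms g)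
    (hX : g.Derives X α) :
    ∃ t, (bitTreeGrammar n c g).Derives X t ∧ beval t = chat n c w := by
  induction h generalizing X with
  | nil => exact absurd rfl hne
  | @terminal a α w hw ih =>
    have ha : [.terminal a] ∈ sublistForms g := mem_sublistForms_of_sublist hα (by simp)
    rcases eq_or_ne α [] with rfl | hα₀
    · cases hw
      exact ⟨_, bitTreeGrammar_derives_codeTree ha hX, beval_codeTree hn a⟩
    · have hαmem := mem_sublistForms_of_sublist hα (List.sublist_cons_self _ α)
      obtain ⟨t, ht, hbt⟩ := ih hαmem hα₀ ⟨α, hαmem⟩ (.refl _)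
      refine ⟨_, bitTreeGrammar_derives_cat (Y := ⟨_, ha⟩) (Z := ⟨α, hαmem⟩) hX
        (bitTreeGrammar_derives_codeTree ha (.refl _)) ht, ?_⟩
      rw [beval_cat, beval_codeTree hn, hbt, ← chat_append]
      rfl
  | @nonterminal r hr α u w hu hw ihu ihw =>
    have hout : r.output ∈ sublistForms g := .inr ⟨r, hr, .refl _⟩
    have hstep : g.Derives [.nonterminal r.input] r.output :=
      Produces.single ⟨r, hr, ContextFreeRule.Rewrites.input_output⟩
    rcases eq_or_ne α [] with rfl | hα₀
    · cases hw
      rw [List.append_nil]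
      exact ihu hout (hε r hr) X (hX.trans hstep)
    · have hA : [.nonterminal r.input] ∈ sublistForms g :=
        mem_sublistForms_of_sublist hα (by simp)
      have hαmem := mem_sublistForms_of_sublist hα (List.sublist_cons_self _ α)
      obtain ⟨t₁, ht₁, hbt₁⟩ := ihu hout (hε r hr) ⟨_, hA⟩ hstep
      obtain ⟨t₂, ht₂, hbt₂⟩ := ihw hαmem hα₀ ⟨α, hαmem⟩ (.refl _)
      exact ⟨_, bitTreeGrammar_derives_cat (Y := ⟨_, hA⟩) (Z := ⟨α, hαmem⟩) hX ht₁ ht₂,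
        by rw [beval_cat, hbt₁, hbt₂, chat_append]⟩

theorem bitTreeGrammar_corresponds (hn : 0 < n) (hε : ∀ r ∈ g.rules, r.output ≠ []) :
    Corresponds n c g (bitTreeGrammar n c g) := by
  ext x
  constructor
  · rintro ⟨t, ht, rfl⟩
    obtain ⟨w, hw, hbt⟩ := exists_derives_of_bitTreeGrammar_derives hn ht
    exact ⟨w, hw, hbt.symm⟩
  · rintro ⟨w, hw, rfl⟩
    exact exists_bitTreeGrammar_derives_of_yields hn hε (Derives.yields hw)
      (.inl (.refl _)) (List.cons_ne_nil _ _) _ (.refl _)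

theorem Corresponds.exists_mem_language_iff (hc : Function.Injective (chat n c))
    {G₁ G₂ : ContextFreeGrammar T} {G₁' G₂' : RTG Sym3 ar3} (h₁ : Corresponds n c G₁ G₁')
    (h₂ : Corresponds n c G₂ G₂') :
    (∃ w, w ∈ G₁.language ∧ w ∈ G₂.language) ↔
      ∃ t₁ ∈ G₁'.lang, ∃ t₂ ∈ G₂'.lang, beval t₁ = beval t₂ := by
  constructor
  · rintro ⟨w, hw₁, hw₂⟩
    obtain ⟨t₁, ht₁, hb₁⟩ : chat n c w ∈ beval '' G₁'.lang := h₁ ▸ ⟨w, hw₁, rfl⟩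
    obtain ⟨t₂, ht₂, hb₂⟩ : chat n c w ∈ beval '' G₂'.lang := h₂ ▸ ⟨w, hw₂, rfl⟩
    exact ⟨t₁, ht₁, t₂, ht₂, hb₁.trans hb₂.symm⟩
  · rintro ⟨t₁, ht₁, t₂, ht₂, hb⟩
    obtain ⟨w₁, hw₁, hb₁⟩ : beval t₁ ∈ chat n c '' G₁.language := h₁ ▸ ⟨t₁, ht₁, rfl⟩
    obtain ⟨w₂, hw₂, hb₂⟩ : beval t₂ ∈ chat n c '' G₂.language := h₂ ▸ ⟨t₂, ht₂, rfl⟩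
    exact ⟨w₁, hw₁, hc (hb₁.trans (hb.trans hb₂.symm)) ▸ hw₂⟩

end

theorem cfg_encoding_into_bitstring_trees_general {T : Type}
    (n : ℕ) (hn : 1 ≤ n) (c : T → (Fin n → Bool)) (hc : Function.Injective c) :
    (∀ G : ContextFreeGrammar T, Finite G.NT → (∀ r ∈ G.rules, r.output ≠ []) →
      ∃ G' : RTG Sym3 ar3, Corresponds n c G G') ∧
    (∀ (G₁ G₂ : ContextFreeGrammar T) (G₁' G₂' : RTG Sym3 ar3),
      Finite G₁.NT → Finite G₂.NT →
      (∀ r ∈ G₁.rules, r.output ≠ []) → (∀ r ∈ G₂.rules, r.output ≠ []) →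
      Corresponds n c G₁ G₁' → Corresponds n c G₂ G₂' →
      ((∃ w, w ∈ G₁.language ∧ w ∈ G₂.language) ↔
        ∃ t₁ ∈ G₁'.lang, ∃ t₂ ∈ G₂'.lang, beval t₁ = beval t₂)) :=
  ⟨fun _ _ hε => ⟨_, bitTreeGrammar_corresponds hn hε⟩,
    fun _ _ _ _ _ _ _ _ h₁ h₂ => h₁.exists_mem_language_iff (chat_injective hn hc) h₂⟩

/-- Let `T` be a finite alphabet, `n ≥ 1`, and `c : T → (Fin n → Bool)`
an injective fixed-length encoding, extended letterwise to `ĉ`.  Every context-free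
grammar over `T` without ε-productions has a corresponding regular tree grammar over
`{@ : 2, 0 : 0, 1 : 0}` whose trees denote exactly the encodings of its words; and for
two such context-free grammars with corresponding tree grammars,
`L(G₁) ∩ L(G₂) ≠ ∅` iff some trees `t₁ ∈ L(G₁')`, `t₂ ∈ L(G₂')` satisfy `⟦t₁⟧ = ⟦t₂⟧`. -/
theorem cfg_encoding_into_bitstring_trees {T : Type} [Fintype T] [DecidableEq T]
    (n : ℕ) (hn : 1 ≤ n) (c : T → (Fin n → Bool)) (hc : Function.Injective c) :
    (∀ G : ContextFreeGrammar T, Finite G.NT → (∀ r ∈ G.rules, r.output ≠ []) →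
      ∃ G' : RTG Sym3 ar3, Corresponds n c G G') ∧
    (∀ (G₁ G₂ : ContextFreeGrammar T) (G₁' G₂' : RTG Sym3 ar3),
      Finite G₁.NT → Finite G₂.NT →
      (∀ r ∈ G₁.rules, r.output ≠ []) → (∀ r ∈ G₂.rules, r.output ≠ []) →
      Corresponds n c G₁ G₁' → Corresponds n c G₂ G₂' →
      ((∃ w, w ∈ G₁.language ∧ w ∈ G₂.language) ↔
        ∃ t₁ ∈ G₁'.lang, ∃ t₂ ∈ G₂'.lang, beval t₁ = beval t₂)) :=
  cfg_encoding_into_bitstring_trees_general n hn c hc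

end SyGuS
end
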